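/- Let L be a simple finite-dimensional anticommutative algebra over a field F of characteristic zero and let r = Σᵢ aᵢ⊗bᵢ ∈ L⊗L be a non skew-symmetric solution of the classical Yang–Baxter equation such that r + τ(r) is L-invariant. Let D(L) be the Drinfeld double of L with respect to the comultiplication Δ_r(a) = Σᵢ aᵢa⊗bᵢ − aᵢ⊗abᵢ. Then D(L) is anticommutative and decomposes as a direct sum of two proper simple ideals, each of which is isomorphic as an algebra to L; in particular D(L) is semisimple and not simple. -/

import Mathlib

open TensorProduct

/-- `I` is a (two-sided) ideal for the product `prod`. -/
def IsIdealP {F M : Type*} [Field F] [AddCommGroup M] [Module F M]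
    (prod : M → M → M) (I : Submodule F M) : Prop :=
  ∀ x ∈ I, ∀ y : M, prod x y ∈ I ∧ prod y x ∈ I

/-- The ideal `I` is simple as an algebra with the restricted product. -/
def IsSimpleIdealP {F M : Type*} [Field F] [AddCommGroup M] [Module F M]
    (prod : M → M → M) (I : Submodule F M) : Prop :=
  (∃ x ∈ I, ∃ y ∈ I, prod x y ≠ 0) ∧
    ∀ J : Submodule F M, J ≤ I →
      (∀ x ∈ J, ∀ y ∈ I, prod x y ∈ J ∧ prod y x ∈ J) → J = ⊥ ∨ J = I

/-- The multiplication of the Drinfeld double `D(A) = A ⊕ A*` associated with the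
bilinear product `mul` and the comultiplication `Δ`:
`(a + f)(b + g) = (ab + f⇀b + a↼g) + (fg + f⇽b + a⇁g)`. -/
noncomputable def dmul {F A : Type*} [Field F] [AddCommGroup A] [Module F A]
    (mul : A →ₗ[F] A →ₗ[F] A) (Δ : A →ₗ[F] A ⊗[F] A)
    (p q : A × Module.Dual F A) : A × Module.Dual F A :=
  (mul p.1 q.1
      + TensorProduct.rid F A (LinearMap.lTensor A p.2 (Δ q.1))
      + TensorProduct.lid F A (LinearMap.rTensor A q.2 (Δ p.1)),
    Δ.dualMap (TensorProduct.dualDistrib F A A (p.2 ⊗ₜ[F] q.2))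
      + p.2.comp (mul q.1)
      + q.2.comp (mul.flip p.1))

/-- The classical Yang–Baxter equation for `r = ∑ i, a i ⊗ b i`. -/
def CYBE {F L : Type*} [Field F] [AddCommGroup L] [Module F L]
    (mul : L →ₗ[F] L →ₗ[F] L) {n : ℕ} (a b : Fin n → L) : Prop :=
  ∑ i : Fin n, ∑ j : Fin n,
      (mul (a i) (a j) ⊗ₜ[F] (b i ⊗ₜ[F] b j)
        - a i ⊗ₜ[F] (mul (a j) (b i) ⊗ₜ[F] b j)
        + a i ⊗ₜ[F] (a j ⊗ₜ[F] mul (b i) (b j))) = 0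

/-- The comultiplication `Δ_r(c) = ∑ i, (aᵢ·c) ⊗ bᵢ - aᵢ ⊗ (c·bᵢ)` induced by
`r = ∑ i, a i ⊗ b i`. -/
noncomputable def Δr {F L : Type*} [Field F] [AddCommGroup L] [Module F L]
    (mul : L →ₗ[F] L →ₗ[F] L) {n : ℕ} (a b : Fin n → L) : L →ₗ[F] L ⊗[F] L :=
  ∑ i, (((TensorProduct.mk F L L).flip (b i)).comp (mul (a i))
        - (TensorProduct.mk F L L (a i)).comp (mul.flip (b i)))

/-!
Write `r₊ f = (id ⊗ f) r` and `r₋ f = (f ⊗ id) r` for `f ∈ L*`. The CYBE together with the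
invariance of `r + τ(r)` makes `p₊ (x, f) = x + r₊ f` and `p₋ (x, f) = x - r₋ f` algebra
homomorphisms `D(L) → L`. Their difference `(x, f) ↦ (r₊ + r₋) f` is contraction with `r + τ(r)`:
its image is an ideal of `L` by invariance, and nonzero as `r` is not skew-symmetric, so it is all
of `L` by simplicity. Hence `(p₊, p₋) : D(L) → L × L` is onto, so bijective by counting dimensions,
and `ker p₊`, `ker p₋` are complementary ideals, each mapped isomorphically onto `L` by the other
projection.
-/

section ProductOfHomomorphisms

open LinearMap

variable {F M L : Type*} [Field F] [AddCommGroup M] [Module F M] [AddCommGroup L] [Module F L]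
  {prod : M → M → M} {mul : L →ₗ[F] L →ₗ[F] L} {P Q : M →ₗ[F] L}

theorem isIdealP_ker (hP : ∀ x y, P (prod x y) = mul (P x) (P y)) : IsIdealP prod (ker P) := by
  intro x hx y
  rw [mem_ker] at hx
  simp [mem_ker, hP, hx]

theorem bijective_prod_comm (h : Function.Bijective (P.prod Q)) :
    Function.Bijective (Q.prod P) :=
  (LinearEquiv.prodComm F L L).bijective.comp h

theorem isCompl_ker_of_bijective_prod (h : Function.Bijective (P.prod Q)) :
    IsCompl (ker P) (ker Q) := by
  refine ⟨?_, codisjoint_iff.mpr (eq_top_iff.mpr fun z _ => ?_)⟩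
  · rw [disjoint_iff, ← ker_prod, ker_eq_bot]
    exact h.1
  · obtain ⟨z₁, hz₁⟩ := h.2 (0, Q z)
    simp only [prod_apply, Function.prod, Prod.mk.injEq] at hz₁
    refine Submodule.mem_sup.mpr ⟨z₁, hz₁.1, z - z₁, ?_, add_sub_cancel z₁ z⟩
    simp [mem_ker, hz₁.2]

theorem bijective_domRestrict_ker (h : Function.Bijective (P.prod Q)) :
    Function.Bijective (Q.domRestrict (ker P)) := by
  refine ⟨fun z w hzw => Subtype.ext (h.1 ?_), fun u => ?_⟩
  · have hz : P z = 0 := z.2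
    have hw : P w = 0 := w.2
    simpa [hz, hw] using hzw
  · obtain ⟨z, hz⟩ := h.2 (0, u)
    simp only [prod_apply, Function.prod, Prod.mk.injEq] at hz
    exact ⟨⟨z, hz.1⟩, hz.2⟩

theorem exists_linearEquiv_ker (hP : ∀ x y, P (prod x y) = mul (P x) (P y))
    (hQ : ∀ x y, Q (prod x y) = mul (Q x) (Q y)) (h : Function.Bijective (P.prod Q)) :
    ∃ e : L ≃ₗ[F] ker P, ∀ u v, (e (mul u v) : M) = prod (e u) (e v) := by
  set Q' := LinearEquiv.ofBijective _ (bijective_domRestrict_ker h)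
  refine ⟨Q'.symm, fun u v => ?_⟩
  have hmem := (isIdealP_ker hP _ (Q'.symm u).2 (Q'.symm v)).1
  rw [← Submodule.coe_mk _ hmem, Subtype.coe_inj, LinearEquiv.symm_apply_eq]
  have hQ' : ∀ w, Q (Q'.symm w) = w := Q'.apply_symm_apply
  change mul u v = Q (prod _ _)
  rw [hQ, hQ', hQ']

theorem isSimpleIdealP_of_linearEquiv
    (hsimple : (∃ x y : L, mul x y ≠ 0) ∧
      ∀ I : Submodule F L, (∀ x ∈ I, ∀ y : L, mul x y ∈ I ∧ mul y x ∈ I) → I = ⊥ ∨ I = ⊤)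
    {I : Submodule F M} (e : L ≃ₗ[F] I) (he : ∀ u v, (e (mul u v) : M) = prod (e u) (e v)) :
    IsSimpleIdealP prod I := by
  obtain ⟨⟨x, y, hxy⟩, hideal⟩ := hsimple
  set φ : L →ₗ[F] M := I.subtype ∘ₗ e.toLinearMap
  have hφ : range φ = I := by
    rw [range_comp, LinearEquiv.range, Submodule.map_top, Submodule.range_subtype]
  refine ⟨⟨e x, (e x).2, e y, (e y).2, ?_⟩, fun J hJI hJ => ?_⟩
  · rw [← he]
    simpa using hxy
  have hJ' : J = (J.comap φ).map φ := by
    rw [Submodule.map_comap_eq, hφ, inf_eq_right.mpr hJI]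
  have hJ'ideal : ∀ u ∈ J.comap φ, ∀ v, mul u v ∈ J.comap φ ∧ mul v u ∈ J.comap φ := by
    intro u hu v
    simp only [Submodule.mem_comap, φ, LinearMap.comp_apply, Submodule.subtype_apply,
      LinearEquiv.coe_coe, he] at hu ⊢
    exact hJ _ hu _ (e v).2
  rcases hideal _ hJ'ideal with h | h
  · exact Or.inl (by rw [hJ', h, Submodule.map_bot])
  · exact Or.inr (by rw [hJ', h, Submodule.map_top, hφ])

end ProductOfHomomorphisms

section DrinfeldDouble

variable {F L : Type*} [Field F] [AddCommGroup L] [Module F L] {n : ℕ}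

variable (F) in
/-- `contraction F v w f = (id ⊗ f) (∑ i, v i ⊗ w i)`. -/
noncomputable def contraction (v w : Fin n → L) : Module.Dual F L →ₗ[F] L :=
  ∑ i, (LinearMap.applyₗ (w i)).smulRight (v i)

@[simp]
theorem contraction_apply (v w : Fin n → L) (f : Module.Dual F L) :
    contraction F v w f = ∑ i, f (w i) • v i := by
  simp [contraction]

variable (F) in
noncomputable def symmContraction (a b : Fin n → L) : Module.Dual F L →ₗ[F] L :=
  contraction F a b + contraction F b a

variable (F) in
noncomputable def projPlus (a b : Fin n → L) : L × Module.Dual F L →ₗ[F] L :=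
  LinearMap.fst F L _ + contraction F a b ∘ₗ LinearMap.snd F L _

variable (F) in
noncomputable def projMinus (a b : Fin n → L) : L × Module.Dual F L →ₗ[F] L :=
  LinearMap.fst F L _ - contraction F b a ∘ₗ LinearMap.snd F L _

theorem projPlus_apply (a b : Fin n → L) (p : L × Module.Dual F L) :
    projPlus F a b p = p.1 + ∑ i, p.2 (b i) • a i := by
  simp [projPlus]

theorem projMinus_apply (a b : Fin n → L) (p : L × Module.Dual F L) :
    projMinus F a b p = p.1 - ∑ i, p.2 (a i) • b i := by
  simp [projMinus]

theorem projPlus_sub_projMinus (a b : Fin n → L) (p : L × Module.Dual F L) :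
    projPlus F a b p - projMinus F a b p = symmContraction F a b p.2 := by
  simp [projPlus, projMinus, symmContraction]

theorem bijective_projPlus_prod_projMinus [FiniteDimensional F L] {a b : Fin n → L}
    (hT : Function.Surjective (symmContraction F a b)) :
    Function.Bijective ((projPlus F a b).prod (projMinus F a b)) := by
  have hsurj : Function.Surjective ((projPlus F a b).prod (projMinus F a b)) := by
    rintro ⟨u, v⟩
    obtain ⟨f, hf⟩ := hT (u - v)
    have hplus : projPlus F a b (u - contraction F a b f, f) = u := by simp [projPlus]
    refine ⟨(u - contraction F a b f, f), Prod.ext hplus ?_⟩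
    have h := projPlus_sub_projMinus a b (u - contraction F a b f, f)
    rw [hplus, hf] at h
    change projMinus F a b _ = v
    linear_combination (norm := module) -h
  refine ⟨(LinearMap.injective_iff_surjective_of_finrank_eq_finrank ?_).mpr hsurj, hsurj⟩
  simp [Module.finrank_prod, Subspace.dual_finrank_eq]

variable (mul : L →ₗ[F] L →ₗ[F] L) (a b : Fin n → L)

theorem Δr_apply (c : L) :
    Δr mul a b c = ∑ i, (mul (a i) c ⊗ₜ[F] b i - a i ⊗ₜ[F] mul c (b i)) := by
  simp [Δr]

theorem dmul_fst (p q : L × Module.Dual F L) :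
    (dmul mul (Δr mul a b) p q).1
      = mul p.1 q.1
        + ∑ i, (p.2 (b i) • mul (a i) q.1 - p.2 (mul q.1 (b i)) • a i)
        + ∑ i, (q.2 (mul (a i) p.1) • b i - q.2 (a i) • mul p.1 (b i)) := by
  simp [dmul, Δr_apply, map_sum]

theorem dmul_snd (p q : L × Module.Dual F L) (c : L) :
    (dmul mul (Δr mul a b) p q).2 c
      = (∑ i, (p.2 (mul (a i) c) * q.2 (b i) - p.2 (a i) * q.2 (mul c (b i))))
        + p.2 (mul q.1 c) + q.2 (mul c p.1) := by
  simp [dmul, Δr_apply, map_sum, mul_comm]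

def IsInvariantSymmPart : Prop :=
  ∀ c : L, ∑ i, (mul (a i) c ⊗ₜ[F] b i + a i ⊗ₜ[F] mul (b i) c
    + mul (b i) c ⊗ₜ[F] a i + b i ⊗ₜ[F] mul (a i) c) = 0

variable {mul a b}

theorem IsInvariantSymmPart.contract_fst (hinv : IsInvariantSymmPart mul a b)
    (f : Module.Dual F L) (c : L) :
    ∑ i, (f (mul (a i) c) • b i + f (a i) • mul (b i) c
      + f (mul (b i) c) • a i + f (b i) • mul (a i) c) = 0 := by
  simpa [map_sum] using congrArg (TensorProduct.lid F L ∘ LinearMap.rTensor L f) (hinv c)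

theorem CYBE.contract_snd_thd (hcybe : CYBE mul a b) (f g : Module.Dual F L) :
    ∑ i, ∑ j, ((f (b i) * g (b j)) • mul (a i) (a j)
      - (f (mul (a j) (b i)) * g (b j)) • a i
      + (f (a j) * g (mul (b i) (b j))) • a i) = 0 := by
  simpa [map_sum] using congrArg (TensorProduct.rid F L ∘
    LinearMap.lTensor L (TensorProduct.dualDistrib F L L (f ⊗ₜ[F] g))) hcybe

theorem CYBE.contract_fst_snd (hcybe : CYBE mul a b) (f g : Module.Dual F L) :
    ∑ j, ∑ i, ((f (mul (a i) (a j)) * g (b i)) • b j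
      - (f (a i) * g (mul (a j) (b i))) • b j
      + (f (a i) * g (a j)) • mul (b i) (b j)) = 0 := by
  rw [Finset.sum_comm]
  simpa [map_sum, smul_smul] using congrArg (TensorProduct.lid F L ∘ LinearMap.rTensor L g ∘
    TensorProduct.lid F (L ⊗[F] L) ∘ LinearMap.rTensor (L ⊗[F] L) f) hcybe

theorem projPlus_dmul (hanti : ∀ v : L, mul v v = 0) (hcybe : CYBE mul a b)
    (hinv : IsInvariantSymmPart mul a b) (p q : L × Module.Dual F L) :
    projPlus F a b (dmul mul (Δr mul a b) p q) = mul (projPlus F a b p) (projPlus F a b q) := by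
  obtain ⟨x, f⟩ := p
  obtain ⟨y, g⟩ := q
  have hI := hinv.contract_fst g x
  have hC := hcybe.contract_snd_thd f g
  simp only [Finset.sum_add_distrib, Finset.sum_sub_distrib] at hI hC
  have hC' : (∑ k, ∑ l, (g (b k) * f (b l)) • mul (a l) (a k))
      = (∑ k, ∑ l, (f (mul (a l) (b k)) * g (b l)) • a k)
        - ∑ k, ∑ l, (f (a l) * g (mul (b k) (b l))) • a k := by
    rw [Finset.sum_comm]
    simp_rw [mul_comm (g _)]
    linear_combination (norm := module) hC
  simp only [projPlus_apply, dmul_fst, dmul_snd]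
  simp only [map_add, map_sum, map_smul, LinearMap.add_apply, LinearMap.sum_apply,
    LinearMap.smul_apply, Finset.smul_sum, smul_smul, smul_add, add_smul, sub_smul,
    Finset.sum_smul, Finset.sum_add_distrib, Finset.sum_sub_distrib]
  simp only [← LinearMap.IsAlt.neg hanti _ x, smul_neg, Finset.sum_neg_distrib]
  linear_combination (norm := module) hI - hC'

theorem projMinus_dmul (hanti : ∀ v : L, mul v v = 0) (hcybe : CYBE mul a b)
    (hinv : IsInvariantSymmPart mul a b) (p q : L × Module.Dual F L) :
    projMinus F a b (dmul mul (Δr mul a b) p q)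
      = mul (projMinus F a b p) (projMinus F a b q) := by
  obtain ⟨x, f⟩ := p
  obtain ⟨y, g⟩ := q
  have hI := hinv.contract_fst f y
  have hC := hcybe.contract_fst_snd f g
  simp only [Finset.sum_add_distrib, Finset.sum_sub_distrib] at hI hC
  have hC' : (∑ k, ∑ l, (g (a k) * f (a l)) • mul (b l) (b k))
      = (∑ k, ∑ l, (f (a l) * g (mul (a k) (b l))) • b k)
        - ∑ k, ∑ l, (f (mul (a l) (a k)) * g (b l)) • b k := by
    simp_rw [mul_comm (g _)]
    linear_combination (norm := module) hC
  simp only [projMinus_apply, dmul_fst, dmul_snd]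
  simp only [map_sub, map_sum, map_smul, LinearMap.sub_apply, LinearMap.sum_apply,
    LinearMap.smul_apply, Finset.smul_sum, smul_smul, smul_sub, add_smul, sub_smul,
    Finset.sum_smul, Finset.sum_add_distrib, Finset.sum_sub_distrib]
  simp only [← LinearMap.IsAlt.neg hanti _ y, Finset.sum_neg_distrib, map_neg, neg_smul]
  linear_combination (norm := module) hI - hC'

theorem dmul_self [CharZero F] (hanti : ∀ v : L, mul v v = 0)
    (hinv : IsInvariantSymmPart mul a b) (p : L × Module.Dual F L) :
    dmul mul (Δr mul a b) p p = 0 := by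
  obtain ⟨x, f⟩ := p
  refine Prod.ext ?_ (LinearMap.ext fun c => ?_)
  · have hI := hinv.contract_fst f x
    simp only [Finset.sum_add_distrib] at hI
    rw [dmul_fst]
    simp only [hanti, ← LinearMap.IsAlt.neg hanti _ x, map_neg, smul_neg, neg_smul,
      Finset.sum_neg_distrib, Finset.sum_sub_distrib, Prod.fst_zero]
    linear_combination (norm := module) hI
  · -- applying `f` once more to the invariance identity gives twice the sum in `dmul_snd`
    have hI := congrArg f (hinv.contract_fst f c)
    simp only [map_sum, map_add, map_smul, map_zero, smul_eq_mul, Finset.sum_add_distrib,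
      mul_comm (f (b _)) (f (mul (a _) c)), mul_comm (f (mul (b _) c)) (f (a _))] at hI
    rw [dmul_snd]
    simp only [← LinearMap.IsAlt.neg hanti _ c, map_neg, mul_neg, sub_neg_eq_add,
      Finset.sum_add_distrib, Prod.snd_zero, LinearMap.zero_apply]
    linear_combination hI / 2

theorem symmContraction_comp_flip (hinv : IsInvariantSymmPart mul a b)
    (g : Module.Dual F L) (c : L) :
    symmContraction F a b (g ∘ₗ mul.flip c) = -mul (symmContraction F a b g) c := by
  have hI := hinv.contract_fst g c
  simp only [Finset.sum_add_distrib] at hI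
  simp only [symmContraction, LinearMap.add_apply, contraction_apply, LinearMap.comp_apply,
    LinearMap.flip_apply, map_add, map_sum, map_smul, LinearMap.sum_apply, LinearMap.smul_apply]
  linear_combination (norm := module) hI

theorem symmContraction_ne_zero [FiniteDimensional F L]
    (hns : ∑ i, b i ⊗ₜ[F] a i ≠ -∑ i, a i ⊗ₜ[F] b i) : symmContraction F a b ≠ 0 := by
  let θ : L ⊗[F] L ≃ₗ[F] (Module.Dual F L →ₗ[F] L) :=
    (TensorProduct.congr (Module.evalEquiv F L) (LinearEquiv.refl F L)).trans
      (dualTensorHomEquiv F (Module.Dual F L) L)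
  have hθ : θ (∑ i, b i ⊗ₜ[F] a i + ∑ i, a i ⊗ₜ[F] b i) = symmContraction F a b := by
    ext f
    simp [θ, map_sum, dualTensorHomEquiv, Module.evalEquiv, symmContraction]
  rw [Ne, eq_neg_iff_add_eq_zero, ← θ.map_eq_zero_iff, hθ] at hns
  exact hns

theorem symmContraction_surjective [FiniteDimensional F L] (hanti : ∀ v : L, mul v v = 0)
    (hideal : ∀ I : Submodule F L,
      (∀ x ∈ I, ∀ y : L, mul x y ∈ I ∧ mul y x ∈ I) → I = ⊥ ∨ I = ⊤)
    (hinv : IsInvariantSymmPart mul a b) (hns : ∑ i, b i ⊗ₜ[F] a i ≠ -∑ i, a i ⊗ₜ[F] b i) :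
    Function.Surjective (symmContraction F a b) := by
  have hrange : ∀ x ∈ LinearMap.range (symmContraction F a b), ∀ y : L,
      mul x y ∈ LinearMap.range (symmContraction F a b)
        ∧ mul y x ∈ LinearMap.range (symmContraction F a b) := by
    rintro _ ⟨g, rfl⟩ y
    have hmem : mul (symmContraction F a b g) y ∈ LinearMap.range (symmContraction F a b) :=
      ⟨-(g ∘ₗ mul.flip y), by rw [map_neg, symmContraction_comp_flip hinv, neg_neg]⟩
    exact ⟨hmem, by rw [← LinearMap.IsAlt.neg hanti]; exact neg_mem hmem⟩
  rw [← LinearMap.range_eq_top]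
  exact (hideal _ hrange).resolve_left
    (LinearMap.range_eq_bot.not.mpr (symmContraction_ne_zero hns))

end DrinfeldDouble

theorem stmt19 {F L : Type*} [Field F] [CharZero F] [AddCommGroup L] [Module F L]
    [FiniteDimensional F L] (mul : L →ₗ[F] L →ₗ[F] L)
    -- `L` is anticommutative
    (hanti : ∀ v : L, mul v v = 0)
    -- `L` is simple
    (hsimple : (∃ x y : L, mul x y ≠ 0) ∧
      ∀ I : Submodule F L, (∀ x ∈ I, ∀ y : L, mul x y ∈ I ∧ mul y x ∈ I) → I = ⊥ ∨ I = ⊤)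
    -- `r = ∑ i, a i ⊗ b i` is a solution of the CYBE
    {n : ℕ} (a b : Fin n → L) (hcybe : CYBE mul a b)
    -- `r` is not skew-symmetric: `τ(r) ≠ -r`
    (hns : ∑ i, b i ⊗ₜ[F] a i ≠ -∑ i, a i ⊗ₜ[F] b i)
    -- `r + τ(r)` is `L`-invariant
    (hinv : ∀ c : L, ∑ i, (mul (a i) c ⊗ₜ[F] b i + a i ⊗ₜ[F] mul (b i) c
        + mul (b i) c ⊗ₜ[F] a i + b i ⊗ₜ[F] mul (a i) c) = 0) :
    -- `D(L)` (w.r.t. `Δ_r`) is anticommutative and is the direct sum of two proper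
    -- simple ideals, each isomorphic as an algebra to `L`
    (∀ p : L × Module.Dual F L, dmul mul (Δr mul a b) p p = 0) ∧
    ∃ L₁ L₂ : Submodule F (L × Module.Dual F L),
      L₁ ≠ ⊥ ∧ L₁ ≠ ⊤ ∧ L₂ ≠ ⊥ ∧ L₂ ≠ ⊤ ∧ IsCompl L₁ L₂ ∧
      IsIdealP (dmul mul (Δr mul a b)) L₁ ∧ IsIdealP (dmul mul (Δr mul a b)) L₂ ∧
      IsSimpleIdealP (dmul mul (Δr mul a b)) L₁ ∧ IsSimpleIdealP (dmul mul (Δr mul a b)) L₂ ∧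
      (∃ e : L ≃ₗ[F] L₁, ∀ u v : L,
        (e (mul u v) : L × Module.Dual F L) = dmul mul (Δr mul a b) (e u) (e v)) ∧
      (∃ e : L ≃ₗ[F] L₂, ∀ u v : L,
        (e (mul u v) : L × Module.Dual F L) = dmul mul (Δr mul a b) (e u) (e v)) := by
  obtain ⟨x, y, hxy⟩ := hsimple.1
  have : Nontrivial L := nontrivial_of_ne x 0 (by rintro rfl; simp at hxy)
  have hbij :=
    bijective_projPlus_prod_projMinus (symmContraction_surjective hanti hsimple.2 hinv hns)
  have hplus := projPlus_dmul hanti hcybe hinv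
  have hminus := projMinus_dmul hanti hcybe hinv
  have hcompl := isCompl_ker_of_bijective_prod hbij
  obtain ⟨e₁, he₁⟩ := exists_linearEquiv_ker hplus hminus hbij
  obtain ⟨e₂, he₂⟩ := exists_linearEquiv_ker hminus hplus (bijective_prod_comm hbij)
  have hne₁ : LinearMap.ker (projPlus F a b) ≠ ⊥ :=
    Submodule.nontrivial_iff_ne_bot.mp e₁.symm.toEquiv.nontrivial
  have hne₂ : LinearMap.ker (projMinus F a b) ≠ ⊥ :=
    Submodule.nontrivial_iff_ne_bot.mp e₂.symm.toEquiv.nontrivial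
  refine ⟨dmul_self hanti hinv, _, _,
    hne₁, fun h => hne₂ (eq_bot_of_isCompl_top (h ▸ hcompl).symm),
    hne₂, fun h => hne₁ (eq_bot_of_isCompl_top (h ▸ hcompl)), hcompl, isIdealP_ker hplus,
    isIdealP_ker hminus, isSimpleIdealP_of_linearEquiv hsimple e₁ he₁,
    isSimpleIdealP_of_linearEquiv hsimple e₂ he₂, ⟨e₁, he₁⟩, ⟨e₂, he₂⟩⟩
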